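/- One has T·δ(T) → 0 as T → 0⁺, and consequently for every T > 0, δ(T) = (1/T) ∫₀^T D(T') dT'. -/

import Mathlib

/-!
Put `ε̄ = ε - ε⁰ ≥ 0` and `β = 1/(k_B T)`. Then `T δ(T) = (2/k_B) ⟨ε̄⟩_β`, the mean of `ε̄` under
the Gibbs weight `e^{-β ε̄}`. Since `ess inf ε̄ = 0`, the weight of `{ε̄ ≤ δ/2}` is at least
`c e^{-βδ/2}` with `c > 0`, while `{ε̄ > δ}` contributes `O(e^{-βδ})` to `∫ ε̄ e^{-β ε̄}`; hence
`⟨ε̄⟩_β ≤ δ + o(1)` as `β → ∞`, i.e. `T δ(T) → 0` as `T → 0⁺`. Differentiating under the integral,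
`d⟨ε̄⟩_β/dβ = -Var_β(ε̄)`, so `D(T) = (2/k_B) Var_β(ε̄)/(k_B T²) ≥ 0`. A nonnegative derivative is
integrable, and the fundamental theorem of calculus on `[0, T]` gives `∫₀^T D = T δ(T) - 0`.
-/

open MeasureTheory Real Filter

noncomputable section

variable {𝓔 : Type*} [MeasurableSpace 𝓔]

/-- The (thermodynamic) number of internal degrees of freedom
`δ(T) = (2/(k_B T)) ⬝ (∫ ε̄ e^{-ε̄/(k_B T)} dμ) / (∫ e^{-ε̄/(k_B T)} dμ)`, `ε̄ = ε - ε0`. -/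
def deltaFun (μ : Measure 𝓔) (ε : 𝓔 → ℝ) (ε0 : ℝ) (kB T : ℝ) : ℝ :=
  (2 / (kB * T)) *
    ((∫ ζ, (ε ζ - ε0) * Real.exp (-(ε ζ - ε0) / (kB * T)) ∂μ) /
      (∫ ζ, Real.exp (-(ε ζ - ε0) / (kB * T)) ∂μ))

/-- `D(T) = d(T δ(T))/dT`. -/
def Dfun (μ : Measure 𝓔) (ε : 𝓔 → ℝ) (ε0 : ℝ) (kB T : ℝ) : ℝ :=
  deriv (fun s => s * deltaFun μ ε ε0 kB s) T

open Set Topology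

theorem pow_mul_exp_neg_mul_le {x β : ℝ} (hx : 0 ≤ x) (hβ : 0 < β) (n : ℕ) :
    x ^ n * exp (-β * x) ≤ n.factorial * (2 / β) ^ n * exp (-(β / 2) * x) := by
  have h := pow_div_factorial_le_exp (β / 2 * x) (by positivity) n
  rw [div_le_iff₀ (by positivity)] at h
  have hexp : exp (β / 2 * x) * exp (-β * x) = exp (-(β / 2) * x) := by
    rw [← exp_add]; ring_nf
  calc x ^ n * exp (-β * x) = (2 / β) ^ n * (β / 2 * x) ^ n * exp (-β * x) := by
        rw [← mul_pow, ← mul_assoc, div_mul_div_cancel₀ (by positivity), div_self two_ne_zero,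
          one_mul]
    _ ≤ (2 / β) ^ n * (exp (β / 2 * x) * n.factorial) * exp (-β * x) := by gcongr
    _ = _ := by rw [← hexp]; ring

theorem mul_exp_neg_mul_le {x β δ : ℝ} (hx : 0 ≤ x) (hβ : 1 ≤ β) (hδ : 0 ≤ δ) :
    x * exp (-β * x) ≤ δ * exp (-β * x) + exp (-(β - 1) * δ) * (x * exp (-1 * x)) := by
  rcases le_or_gt x δ with hxδ | hδx
  · have := mul_le_mul_of_nonneg_right hxδ (exp_pos (-β * x)).le
    have : 0 ≤ exp (-(β - 1) * δ) * (x * exp (-1 * x)) := by positivity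
    linarith
  · calc x * exp (-β * x) = exp (-(β - 1) * x) * (x * exp (-1 * x)) := by
          rw [mul_left_comm, ← exp_add]; ring_nf
      _ ≤ exp (-(β - 1) * δ) * (x * exp (-1 * x)) := by
          gcongr exp ?_ * _
          nlinarith
      _ ≤ _ := le_add_of_nonneg_left (by positivity)

/-- For `n = 0` this is the partition function. -/
def boltzmannMoment (μ : Measure 𝓔) (f : 𝓔 → ℝ) (n : ℕ) (β : ℝ) : ℝ :=
  ∫ x, f x ^ n * exp (-β * f x) ∂μ

def meanEnergy (μ : Measure 𝓔) (f : 𝓔 → ℝ) (β : ℝ) : ℝ :=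
  boltzmannMoment μ f 1 β / boltzmannMoment μ f 0 β

def energyVariance (μ : Measure 𝓔) (f : 𝓔 → ℝ) (β : ℝ) : ℝ :=
  boltzmannMoment μ f 2 β / boltzmannMoment μ f 0 β - meanEnergy μ f β ^ 2

section Moments

variable {μ : Measure 𝓔} {f : 𝓔 → ℝ}

theorem integrable_pow_mul_exp_neg_mul (hf : Measurable f) (hf0 : ∀ᵐ x ∂μ, 0 ≤ f x)
    (hZ : ∀ β, 0 < β → Integrable (fun x => exp (-β * f x)) μ) (n : ℕ) {β : ℝ} (hβ : 0 < β) :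
    Integrable (fun x => f x ^ n * exp (-β * f x)) μ := by
  refine ((hZ (β / 2) (half_pos hβ)).const_mul (n.factorial * (2 / β) ^ n)).mono'
    (by fun_prop) ?_
  filter_upwards [hf0] with x hx
  rw [norm_of_nonneg (mul_nonneg (pow_nonneg hx n) (exp_pos _).le)]
  exact pow_mul_exp_neg_mul_le hx hβ n

theorem hasDerivAt_boltzmannMoment (hf : Measurable f) (hf0 : ∀ᵐ x ∂μ, 0 ≤ f x)
    (hZ : ∀ β, 0 < β → Integrable (fun x => exp (-β * f x)) μ) (n : ℕ) {β : ℝ} (hβ : 0 < β) :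
    HasDerivAt (boltzmannMoment μ f n) (-boltzmannMoment μ f (n + 1) β) β := by
  have hball : ∀ b ∈ Metric.ball β (β / 2), β / 2 < b := fun b hb => by
    linarith [(abs_lt.1 (Real.dist_eq b β ▸ Metric.mem_ball.1 hb)).1]
  have h := hasDerivAt_integral_of_dominated_loc_of_deriv_le (μ := μ) (x₀ := β)
    (F := fun b x => f x ^ n * exp (-b * f x))
    (F' := fun b x => -(f x ^ (n + 1) * exp (-b * f x)))
    (Metric.ball_mem_nhds β (half_pos hβ)) (Eventually.of_forall fun b => by fun_prop)
    (integrable_pow_mul_exp_neg_mul hf hf0 hZ n hβ) (by fun_prop) ?_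
    (integrable_pow_mul_exp_neg_mul hf hf0 hZ (n + 1) (half_pos hβ)) ?_
  · rw [integral_neg] at h
    exact h.2
  · filter_upwards [hf0] with x hx b hb
    rw [norm_neg, norm_of_nonneg (mul_nonneg (pow_nonneg hx _) (exp_pos _).le)]
    gcongr
    nlinarith [hball b hb]
  · refine ae_of_all _ fun x b _ => ?_
    exact (((hasDerivAt_neg b).mul_const (f x)).exp.const_mul (f x ^ n)).congr_deriv (by ring)

theorem boltzmannMoment_zero_pos [NeZero μ]
    {β : ℝ} (hZ : Integrable (fun x => exp (-β * f x)) μ) : 0 < boltzmannMoment μ f 0 β := by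
  simpa [boltzmannMoment] using integral_exp_pos hZ

theorem boltzmannMoment_nonneg (hf0 : ∀ᵐ x ∂μ, 0 ≤ f x) (n : ℕ) (β : ℝ) :
    0 ≤ boltzmannMoment μ f n β :=
  integral_nonneg_of_ae (hf0.mono fun _ hx => mul_nonneg (pow_nonneg hx n) (exp_pos _).le)

theorem meanEnergy_nonneg (hf0 : ∀ᵐ x ∂μ, 0 ≤ f x) (β : ℝ) : 0 ≤ meanEnergy μ f β :=
  div_nonneg (boltzmannMoment_nonneg hf0 1 β) (boltzmannMoment_nonneg hf0 0 β)

theorem energyVariance_nonneg [NeZero μ] (hf : Measurable f) (hf0 : ∀ᵐ x ∂μ, 0 ≤ f x)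
    (hZ : ∀ β, 0 < β → Integrable (fun x => exp (-β * f x)) μ) {β : ℝ} (hβ : 0 < β) :
    0 ≤ energyVariance μ f β := by
  set c := meanEnergy μ f β with hc
  have hM0 := boltzmannMoment_zero_pos (hZ β hβ)
  have hint n := integrable_pow_mul_exp_neg_mul hf hf0 hZ n hβ
  have hsq : ∫ x, (f x - c) ^ 2 * exp (-β * f x) ∂μ = boltzmannMoment μ f 2 β
      - 2 * c * boltzmannMoment μ f 1 β + c ^ 2 * boltzmannMoment μ f 0 β := by
    have hexpand : (fun x => (f x - c) ^ 2 * exp (-β * f x)) = fun x =>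
        (f x ^ 2 * exp (-β * f x) - 2 * c * (f x ^ 1 * exp (-β * f x)))
          + c ^ 2 * (f x ^ 0 * exp (-β * f x)) := funext fun x => by ring
    have hint21 : Integrable (fun x => f x ^ 2 * exp (-β * f x)
        - 2 * c * (f x ^ 1 * exp (-β * f x))) μ := (hint 2).sub ((hint 1).const_mul _)
    rw [hexpand, integral_add hint21 ((hint 0).const_mul _),
      integral_sub (hint 2) ((hint 1).const_mul _), integral_const_mul, integral_const_mul]
    rfl
  have hvar : energyVariance μ f β =
      (∫ x, (f x - c) ^ 2 * exp (-β * f x) ∂μ) / boltzmannMoment μ f 0 β := by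
    rw [hsq, energyVariance, hc, meanEnergy]
    field_simp
    ring
  rw [hvar]
  exact div_nonneg (integral_nonneg fun x => by positivity) hM0.le

theorem hasDerivAt_meanEnergy [NeZero μ] (hf : Measurable f) (hf0 : ∀ᵐ x ∂μ, 0 ≤ f x)
    (hZ : ∀ β, 0 < β → Integrable (fun x => exp (-β * f x)) μ) {β : ℝ} (hβ : 0 < β) :
    HasDerivAt (meanEnergy μ f) (-energyVariance μ f β) β := by
  have hM0 := (boltzmannMoment_zero_pos (hZ β hβ)).ne'
  refine ((hasDerivAt_boltzmannMoment hf hf0 hZ 1 hβ).div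
    (hasDerivAt_boltzmannMoment hf hf0 hZ 0 hβ) hM0).congr_deriv ?_
  rw [energyVariance, meanEnergy]
  field_simp
  ring

theorem hasDerivAt_meanEnergy_inv_mul [NeZero μ] (hf : Measurable f) (hf0 : ∀ᵐ x ∂μ, 0 ≤ f x)
    (hZ : ∀ β, 0 < β → Integrable (fun x => exp (-β * f x)) μ) {kB T : ℝ} (hkB : 0 < kB)
    (hT : 0 < T) :
    HasDerivAt (fun T => meanEnergy μ f (kB * T)⁻¹)
      (energyVariance μ f (kB * T)⁻¹ / (kB * T ^ 2)) T := by
  have hβ : HasDerivAt (fun T => (kB * T)⁻¹) (-kB / (kB * T) ^ 2) T :=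
    ((hasDerivAt_id T).const_mul kB).inv (by positivity) |>.congr_deriv (by simp)
  refine ((hasDerivAt_meanEnergy hf hf0 hZ (by positivity)).comp T hβ).congr_deriv ?_
  field_simp

theorem exists_pos_mul_exp_le_boltzmannMoment_zero
    (hZ : ∀ β, 0 < β → Integrable (fun x => exp (-β * f x)) μ)
    (hess : ∀ δ, 0 < δ → ∃ᵐ x ∂μ, f x < δ) {δ : ℝ} (hδ : 0 < δ) :
    ∃ m > 0, ∀ β, 0 < β → m * exp (-β * δ) ≤ boltzmannMoment μ f 0 β := by
  -- for `β > 0`, Markov's inequality for `e^{-β f}` bounds the sublevel set `{f ≤ δ}`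
  have hset : ∀ β, 0 < β → {x | f x ≤ δ} = {x | exp (-β * δ) ≤ exp (-β * f x)} :=
    fun β hβ => by ext x; simp [hβ]
  refine ⟨μ.real {x | f x ≤ δ}, ?_, fun β hβ => ?_⟩
  · have hne : μ {x | f x ≤ δ} ≠ 0 :=
      frequently_ae_iff.1 ((hess δ hδ).mono fun x hx => hx.le)
    have hfin : μ {x | f x ≤ δ} ≠ ⊤ := by
      rw [hset 1 one_pos]
      exact ((hZ 1 one_pos).measure_ge_lt_top (exp_pos _)).ne
    exact ENNReal.toReal_pos hne hfin
  · rw [hset β hβ, mul_comm]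
    simpa only [boltzmannMoment, pow_zero, one_mul] using
      mul_meas_ge_le_integral_of_nonneg (ae_of_all _ fun x => (exp_pos _).le) (hZ β hβ) _

theorem boltzmannMoment_one_le (hf : Measurable f) (hf0 : ∀ᵐ x ∂μ, 0 ≤ f x)
    (hZ : ∀ β, 0 < β → Integrable (fun x => exp (-β * f x)) μ) {β δ : ℝ} (hβ : 1 ≤ β)
    (hδ : 0 ≤ δ) :
    boltzmannMoment μ f 1 β ≤
      δ * boltzmannMoment μ f 0 β + exp (-(β - 1) * δ) * boltzmannMoment μ f 1 1 := by
  have hint n {β : ℝ} (hβ : 0 < β) := integrable_pow_mul_exp_neg_mul hf hf0 hZ n hβ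
  simp only [boltzmannMoment]
  rw [← integral_const_mul, ← integral_const_mul,
    ← integral_add ((hint 0 (by linarith)).const_mul _) ((hint 1 one_pos).const_mul _)]
  refine integral_mono_ae (hint 1 (by linarith))
    (((hint 0 (by linarith)).const_mul _).add ((hint 1 one_pos).const_mul _)) ?_
  filter_upwards [hf0] with x hx
  simpa only [pow_one, pow_zero, one_mul] using mul_exp_neg_mul_le hx hβ hδ

theorem meanEnergy_le (hf : Measurable f) (hf0 : ∀ᵐ x ∂μ, 0 ≤ f x)
    (hZ : ∀ β, 0 < β → Integrable (fun x => exp (-β * f x)) μ) {m δ β : ℝ} (hm : 0 < m)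
    (hδ : 0 ≤ δ) (hβ : 1 ≤ β) (hZlow : m * exp (-β * (δ / 2)) ≤ boltzmannMoment μ f 0 β) :
    meanEnergy μ f β ≤ δ + exp δ * boltzmannMoment μ f 1 1 / m * exp (-(δ / 2) * β) := by
  have hM0 : 0 < boltzmannMoment μ f 0 β := lt_of_lt_of_le (by positivity) hZlow
  have hM1 := boltzmannMoment_nonneg hf0 1 1
  rw [meanEnergy, div_le_iff₀ hM0]
  calc boltzmannMoment μ f 1 β
      ≤ δ * boltzmannMoment μ f 0 β + exp (-(β - 1) * δ) * boltzmannMoment μ f 1 1 :=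
        boltzmannMoment_one_le hf hf0 hZ hβ hδ
    _ = δ * boltzmannMoment μ f 0 β +
          exp δ * boltzmannMoment μ f 1 1 / m * exp (-(δ / 2) * β) * (m * exp (-β * (δ / 2))) := by
        have hexp : exp (-(β - 1) * δ) = exp δ * exp (-(δ / 2) * β) * exp (-β * (δ / 2)) := by
          rw [← exp_add, ← exp_add]; ring_nf
        rw [hexp]
        field_simp
    _ ≤ δ * boltzmannMoment μ f 0 β +
          exp δ * boltzmannMoment μ f 1 1 / m * exp (-(δ / 2) * β) * boltzmannMoment μ f 0 β := by
        gcongr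
    _ = _ := by ring

theorem tendsto_meanEnergy_atTop (hf : Measurable f) (hf0 : ∀ᵐ x ∂μ, 0 ≤ f x)
    (hZ : ∀ β, 0 < β → Integrable (fun x => exp (-β * f x)) μ)
    (hess : ∀ δ, 0 < δ → ∃ᵐ x ∂μ, f x < δ) :
    Tendsto (meanEnergy μ f) atTop (𝓝 0) := by
  refine tendsto_order.2 ⟨fun a ha => Eventually.of_forall fun β =>
    ha.trans_le (meanEnergy_nonneg hf0 β), fun a ha => ?_⟩
  obtain ⟨m, hm, hZlow⟩ :=
    exists_pos_mul_exp_le_boltzmannMoment_zero hZ hess (δ := a / 2 / 2) (by positivity)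
  have hdecay : Tendsto (fun β => exp (a / 2) * boltzmannMoment μ f 1 1 / m *
      exp (-(a / 2 / 2) * β)) atTop (𝓝 0) := by
    simpa using (tendsto_exp_neg_atTop_nhds_zero.comp
      (tendsto_id.const_mul_atTop (by positivity : 0 < a / 2 / 2))).const_mul
        (exp (a / 2) * boltzmannMoment μ f 1 1 / m)
  filter_upwards [hdecay.eventually (gt_mem_nhds (half_pos ha)), eventually_ge_atTop 1]
    with β hsmall hβ
  have := meanEnergy_le hf hf0 hZ hm (half_pos ha).le hβ (hZlow β (by linarith))
  linarith

end Moments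

theorem integral_deriv_eq_sub_of_deriv_nonneg {g : ℝ → ℝ} {a b : ℝ} (hab : a ≤ b)
    (hga : ContinuousWithinAt g (Ioi a) a) (hdiff : ∀ x ∈ Ioc a b, DifferentiableAt ℝ g x)
    (hnonneg : ∀ x ∈ Ioo a b, 0 ≤ deriv g x) :
    ∫ x in a..b, deriv g x = g b - g a := by
  have hcont : ContinuousOn g (Icc a b) := by
    intro x hx
    rcases hx.1.eq_or_lt with rfl | hax
    · exact (continuousWithinAt_Ioi_iff_Ici.1 hga).mono Icc_subset_Ici_self
    · exact (hdiff x ⟨hax, hx.2⟩).continuousAt.continuousWithinAt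
  have hderiv x (hx : x ∈ Ioo a b) : HasDerivAt g (deriv g x) x :=
    (hdiff x (Ioo_subset_Ioc_self hx)).hasDerivAt
  exact intervalIntegral.integral_eq_sub_of_hasDerivAt_of_le hab hcont hderiv
    ((intervalIntegrable_iff_integrableOn_Ioc_of_le hab).2
      (intervalIntegral.integrableOn_deriv_of_nonneg hcont hderiv hnonneg))

theorem mul_deltaFun_eq (μ : Measure 𝓔) (ε : 𝓔 → ℝ) (ε0 : ℝ) {kB T : ℝ} (hkB : kB ≠ 0)
    (hT : T ≠ 0) :
    T * deltaFun μ ε ε0 kB T = 2 / kB * meanEnergy μ (fun ζ => ε ζ - ε0) (kB * T)⁻¹ := by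
  have harg (x : ℝ) : -(kB * T)⁻¹ * x = -x / (kB * T) := by ring
  simp only [deltaFun, meanEnergy, boltzmannMoment, pow_one, pow_zero, one_mul, harg]
  field_simp

theorem tendsto_mul_deltaFun_nhdsGT_zero {μ : Measure 𝓔} {ε : 𝓔 → ℝ} {ε0 kB : ℝ} (hkB : 0 < kB)
    (hf : Measurable fun ζ => ε ζ - ε0) (hf0 : ∀ᵐ ζ ∂μ, 0 ≤ ε ζ - ε0)
    (hZ : ∀ β, 0 < β → Integrable (fun ζ => exp (-β * (ε ζ - ε0))) μ)
    (hess : ∀ δ, 0 < δ → ∃ᵐ ζ ∂μ, ε ζ - ε0 < δ) :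
    Tendsto (fun T => T * deltaFun μ ε ε0 kB T) (𝓝[>] 0) (𝓝 0) := by
  have hβ : Tendsto (fun T => (kB * T)⁻¹) (𝓝[>] 0) atTop := by
    simpa only [mul_inv] using tendsto_inv_nhdsGT_zero.const_mul_atTop (inv_pos.2 hkB)
  have hlim := ((tendsto_meanEnergy_atTop hf hf0 hZ hess).comp hβ).const_mul (2 / kB)
  rw [mul_zero] at hlim
  exact hlim.congr' <| eventually_mem_nhdsWithin.mono fun T hT =>
    (mul_deltaFun_eq μ ε ε0 hkB.ne' (ne_of_gt hT)).symm

theorem hasDerivAt_mul_deltaFun {μ : Measure 𝓔} [NeZero μ] {ε : 𝓔 → ℝ} {ε0 kB s : ℝ}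
    (hkB : 0 < kB) (hs : 0 < s)
    (hf : Measurable fun ζ => ε ζ - ε0) (hf0 : ∀ᵐ ζ ∂μ, 0 ≤ ε ζ - ε0)
    (hZ : ∀ β, 0 < β → Integrable (fun ζ => exp (-β * (ε ζ - ε0))) μ) :
    HasDerivAt (fun s => s * deltaFun μ ε ε0 kB s)
      (2 / kB * (energyVariance μ (fun ζ => ε ζ - ε0) (kB * s)⁻¹ / (kB * s ^ 2))) s :=
  ((hasDerivAt_meanEnergy_inv_mul hf hf0 hZ hkB hs).const_mul (2 / kB)).congr_of_eventuallyEq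
    ((eventually_gt_nhds hs).mono fun _ ht => mul_deltaFun_eq μ ε ε0 hkB.ne' ht.ne')

/-- **Proposition (δ is the average of D).**
`T δ(T) → 0` as `T → 0⁺`, and consequently `δ(T) = (1/T) ∫₀^T D(T') dT'` for every `T > 0`. -/
theorem delta_eq_average_of_D
    (μ : Measure 𝓔) (hμ : μ Set.univ ≠ 0)
    (kB : ℝ) (hkB : 0 < kB)
    (ε : 𝓔 → ℝ) (hε : Measurable ε) (ε0 : ℝ)
    (hlow : ∀ᵐ ζ ∂μ, ε0 ≤ ε ζ)
    (hsup : ∀ R : ℝ, (∀ᵐ ζ ∂μ, R ≤ ε ζ) → R ≤ ε0)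
    (hZ : ∀ β : ℝ, 0 < β → Integrable (fun ζ => Real.exp (-β * (ε ζ - ε0))) μ) :
    Tendsto (fun T => T * deltaFun μ ε ε0 kB T) (nhdsWithin 0 (Set.Ioi 0)) (nhds 0) ∧
    ∀ T : ℝ, 0 < T →
      deltaFun μ ε ε0 kB T = (1 / T) * ∫ T' in (0 : ℝ)..T, Dfun μ ε ε0 kB T' := by
  have hf : Measurable fun ζ => ε ζ - ε0 := hε.sub measurable_const
  have hf0 : ∀ᵐ ζ ∂μ, 0 ≤ ε ζ - ε0 := hlow.mono fun ζ h => sub_nonneg.2 h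
  have hess : ∀ δ, 0 < δ → ∃ᵐ ζ ∂μ, ε ζ - ε0 < δ := fun δ hδ h => by
    have := hsup (ε0 + δ) (h.mono fun ζ hζ => by linarith [not_lt.1 hζ])
    linarith
  have : NeZero μ := ⟨fun h => hμ (by simp [h])⟩
  have hlim := tendsto_mul_deltaFun_nhdsGT_zero hkB hf hf0 hZ hess
  refine ⟨hlim, fun T hT => ?_⟩
  have hD s (hs : 0 < s) := hasDerivAt_mul_deltaFun hkB hs hf hf0 hZ
  have hDnonneg : ∀ s ∈ Ioo 0 T, 0 ≤ Dfun μ ε ε0 kB s := fun s hs => by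
    have := energyVariance_nonneg hf hf0 hZ (β := (kB * s)⁻¹) (by positivity [hs.1])
    rw [Dfun, (hD s hs.1).deriv]
    positivity [hs.1]
  simp only [Dfun]
  rw [integral_deriv_eq_sub_of_deriv_nonneg hT.le (by simpa [ContinuousWithinAt] using hlim)
    (fun s hs => (hD s hs.1).differentiableAt) hDnonneg]
  field_simp
  ring

end
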